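/- arXiv:2010.11662 — 2 statements merged into one kernel-verified Lean document; each statement's English description precedes it below -/
import Mathlib

section
/- Let Z ⊆ ℝᴺ be a nonempty set with finitely many designated points Z* (extreme points), let F : Z → ℝ be bounded below on a subset K ⊆ Z, and let π : Z → ℝ be nonnegative on Z with π = 0 on K. Suppose for every α > 0 the problem min over Z of F + α·π has an optimal solution lying in Z*. Then there exists ᾱ > 0 such that for all α ≥ ᾱ, every global minimizer of F + α·π over Z that belongs to Z* satisfies π = 0 at that point, and hence is a global minimizer of F over K. -/
/-!
Since `Zstar` is finite, the positive values of the penalty on it are bounded below by some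
`ε > 0`, and `F` is bounded below on it by some `c`. A minimizer `u ∈ Zstar` of `F + α • pen`
competes with a feasible point `u₀`, so `α * pen u ≤ F u₀ - c`; once `α > (F u₀ - c) / ε` this
rules out `pen u ≥ ε`, hence `pen u = 0`, and minimality then compares `F` on the feasible set.
-/

open Set

theorem Set.Finite.exists_pos_le_of_pos {ι : Type*} {S : Set ι} (hS : S.Finite) (g : ι → ℝ) :
    ∃ ε > 0, ∀ u ∈ S, 0 < g u → ε ≤ g u := by
  by_cases hne : {u ∈ S | 0 < g u}.Nonempty
  · obtain ⟨a, ⟨-, ha⟩, hmin⟩ := exists_min_image _ g (hS.sep _) hne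
    exact ⟨g a, ha, fun u hu hpos => hmin u ⟨hu, hpos⟩⟩
  · exact ⟨1, one_pos, fun u hu hpos => (hne ⟨u, hu, hpos⟩).elim⟩

theorem eq_zero_of_mul_le_of_pos_le {a ε M p : ℝ} (hε : 0 < ε) (hM : 0 ≤ M) (hp : 0 ≤ p)
    (hgap : 0 < p → ε ≤ p) (ha : M / ε < a) (h : a * p ≤ M) : p = 0 := by
  by_contra hne
  have hεp : ε ≤ p := hgap (lt_of_le_of_ne hp (Ne.symm hne))
  have hMa : M < a * ε := (div_lt_iff₀ hε).1 ha
  have ha₀ : 0 ≤ a := (div_nonneg hM hε.le).trans ha.le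
  nlinarith [mul_le_mul_of_nonneg_left hεp ha₀]

theorem exact_penalization_global_general (N : ℕ) (Z Zstar : Set (Fin N → ℝ))
    (F pen : (Fin N → ℝ) → ℝ)
    (hZsub : Zstar ⊆ Z) (hZfin : Zstar.Finite)
    (hK : ∃ u ∈ Z, pen u = 0)
    (hpen : ∀ u ∈ Z, 0 ≤ pen u) :
    ∃ αbar : ℝ, 0 < αbar ∧ ∀ α : ℝ, αbar ≤ α → ∀ u ∈ Zstar,
      (∀ v ∈ Z, F u + α * pen u ≤ F v + α * pen v) →
        pen u = 0 ∧ ∀ v ∈ Z, pen v = 0 → F u ≤ F v := by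
  obtain ⟨u₀, hu₀, hpen₀⟩ := hK
  obtain ⟨ε, hε, hgap⟩ := hZfin.exists_pos_le_of_pos pen
  obtain ⟨c, hc⟩ := ((hZfin.insert u₀).image F).bddBelow
  have hcF : ∀ u ∈ insert u₀ Zstar, c ≤ F u := fun u hu => hc (mem_image_of_mem F hu)
  have hM : 0 ≤ F u₀ - c := sub_nonneg.2 (hcF u₀ (mem_insert _ _))
  refine ⟨(F u₀ - c) / ε + 1, add_pos_of_nonneg_of_pos (div_nonneg hM hε.le) one_pos, ?_⟩
  intro α hα u hu hmin
  have hbound : α * pen u ≤ F u₀ - c := by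
    have hcomp := hmin u₀ hu₀
    rw [hpen₀, mul_zero, add_zero] at hcomp
    linarith [hcF u (mem_insert_of_mem _ hu)]
  have hpen_u : pen u = 0 :=
    eq_zero_of_mul_le_of_pos_le hε hM (hpen u (hZsub hu)) (hgap u hu) (by linarith) hbound
  refine ⟨hpen_u, fun v hv hpv => ?_⟩
  simpa [hpen_u, hpv] using hmin v hv

theorem exact_penalization_global (N : ℕ) (Z Zstar : Set (Fin N → ℝ))
    (F pen : (Fin N → ℝ) → ℝ)
    (hZsub : Zstar ⊆ Z) (hZfin : Zstar.Finite)
    (hK : ∃ u ∈ Z, pen u = 0)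
    (hpen : ∀ u ∈ Z, 0 ≤ pen u)
    (hbdd : ∃ c : ℝ, ∀ u ∈ Zstar, c ≤ F u)
    (hsol : ∀ α : ℝ, 0 < α → ∃ u ∈ Zstar, ∀ v ∈ Z, F u + α * pen u ≤ F v + α * pen v) :
    ∃ αbar : ℝ, 0 < αbar ∧ ∀ α : ℝ, αbar ≤ α → ∀ u ∈ Zstar,
      (∀ v ∈ Z, F u + α * pen u ≤ F v + α * pen v) →
        pen u = 0 ∧ ∀ v ∈ Z, pen v = 0 → F u ≤ F v :=
  exact_penalization_global_general N Z Zstar F pen hZsub hZfin hK hpen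
end

section
/- Let (x̄,ȳ,z̄) be a local minimizer of (x,y,z) ↦ F(x,y) + α·π(y,z) over Z₁, where π(y,z) = Σᵢ min over (rᵢ,sᵢ)∈Tᵢ of (rᵢ zᵢ + sᵢ(b-Ay)ᵢ). Then for any (r̄,s̄) ∈ T achieving π(ȳ,z̄) (i.e., r̄ᵀz̄ + s̄ᵀ(b - Aȳ) = π(ȳ,z̄)), the point (x̄,ȳ,z̄,r̄,s̄) is a local minimizer of (x,y,z,r,s) ↦ F(x,y) + α(rᵀz + sᵀ(b-Ay)) over Z₁ × T. -/
/-!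
Each summand of `π` is an infimum over the 1-simplex, so `π y z ≤ rᵀz + sᵀ(b - Ay)` for every
`(r, s) ∈ T`, with equality at `(ȳ, z̄, r̄, s̄)`. A local minimizer of the
smaller function at which the two agree is therefore a local minimizer of the larger one.
-/

theorem sInf_simplex_combination_le {a c r s : ℝ} (hr : 0 ≤ r) (hs : 0 ≤ s) (hrs : r + s = 1) :
    sInf {v : ℝ | ∃ r' s' : ℝ, 0 ≤ r' ∧ 0 ≤ s' ∧ r' + s' = 1 ∧ v = r' * a + s' * c} ≤
      r * a + s * c := by
  refine csInf_le ⟨min a c, ?_⟩ ⟨r, s, hr, hs, hrs, rfl⟩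
  rintro v ⟨r', s', hr', hs', hrs', rfl⟩
  calc min a c = r' * min a c + s' * min a c := by rw [← add_mul, hrs', one_mul]
    _ ≤ r' * a + s' * c := by gcongr <;> simp

theorem exists_ball_le_of_le_of_eq {X Y β : Type*} [PseudoMetricSpace X] [PseudoMetricSpace Y]
    [Preorder β] {S : Set X} {T : Set Y} {f : X → β} {g : X → Y → β} {x₀ : X} {y₀ : Y}
    (hle : ∀ x ∈ S, ∀ y ∈ T, f x ≤ g x y) (heq : g x₀ y₀ = f x₀)
    (hmin : ∃ ε > 0, ∀ x ∈ S, dist x x₀ < ε → f x₀ ≤ f x) :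
    ∃ ε > 0, ∀ x ∈ S, ∀ y ∈ T, dist (x, y) (x₀, y₀) < ε → g x₀ y₀ ≤ g x y := by
  obtain ⟨ε, hε, hf⟩ := hmin
  refine ⟨ε, hε, fun x hx y hy hd => ?_⟩
  calc g x₀ y₀ = f x₀ := heq
    _ ≤ f x := hf x hx ((le_max_left _ _).trans_lt hd)
    _ ≤ g x y := hle x hx y hy

theorem local_min_Palpha_to_Qalpha_general
    (n l : ℕ) (F : (Fin n → ℝ) → (Fin n → ℝ) → ℝ)
    (A : Matrix (Fin l) (Fin n) ℝ) (b : Fin l → ℝ) (α : ℝ) (hα : 0 < α)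
    (Z1 : Set ((Fin n → ℝ) × (Fin n → ℝ) × (Fin l → ℝ)))
    (π : (Fin n → ℝ) → (Fin l → ℝ) → ℝ)
    (hπ : ∀ y z, π y z = ∑ i, sInf {v : ℝ | ∃ r s : ℝ, 0 ≤ r ∧ 0 ≤ s ∧ r + s = 1 ∧
      v = r * z i + s * (b i - A.mulVec y i)})
    (xb yb : Fin n → ℝ) (zb : Fin l → ℝ)
    (hloc : ∃ ε > 0, ∀ p ∈ Z1, dist p (xb, yb, zb) < ε →
      F xb yb + α * π yb zb ≤ F p.1 p.2.1 + α * π p.2.1 p.2.2)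
    (rb sb : Fin l → ℝ)
    (hach : (∑ i, (rb i * zb i + sb i * (b i - A.mulVec yb i))) = π yb zb) :
    ∃ ε > 0, ∀ p ∈ Z1, ∀ rs : (Fin l → ℝ) × (Fin l → ℝ),
      (∀ i, 0 ≤ rs.1 i ∧ 0 ≤ rs.2 i ∧ rs.1 i + rs.2 i = 1) →
      dist (p, rs) ((xb, yb, zb), (rb, sb)) < ε →
        F xb yb + α * ∑ i, (rb i * zb i + sb i * (b i - A.mulVec yb i)) ≤
          F p.1 p.2.1 + α * ∑ i, (rs.1 i * p.2.2 i + rs.2 i * (b i - A.mulVec p.2.1 i)) := by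
  have hπ_le : ∀ p ∈ Z1, ∀ rs ∈ {rs : (Fin l → ℝ) × (Fin l → ℝ) |
      ∀ i, 0 ≤ rs.1 i ∧ 0 ≤ rs.2 i ∧ rs.1 i + rs.2 i = 1},
      F p.1 p.2.1 + α * π p.2.1 p.2.2 ≤
        F p.1 p.2.1 + α * ∑ i, (rs.1 i * p.2.2 i + rs.2 i * (b i - A.mulVec p.2.1 i)) := by
    intro p _ rs hrs
    gcongr
    rw [hπ]
    exact Finset.sum_le_sum fun i _ =>
      sInf_simplex_combination_le (hrs i).1 (hrs i).2.1 (hrs i).2.2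
  exact exists_ball_le_of_le_of_eq (y₀ := (rb, sb)) hπ_le (by dsimp only; rw [hach]) hloc

theorem local_min_Palpha_to_Qalpha
    (n l : ℕ) (F : (Fin n → ℝ) → (Fin n → ℝ) → ℝ)
    (A : Matrix (Fin l) (Fin n) ℝ) (b : Fin l → ℝ) (α : ℝ) (hα : 0 < α)
    (Z1 : Set ((Fin n → ℝ) × (Fin n → ℝ) × (Fin l → ℝ)))
    (π : (Fin n → ℝ) → (Fin l → ℝ) → ℝ)
    (hπ : ∀ y z, π y z = ∑ i, sInf {v : ℝ | ∃ r s : ℝ, 0 ≤ r ∧ 0 ≤ s ∧ r + s = 1 ∧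
      v = r * z i + s * (b i - A.mulVec y i)})
    (xb yb : Fin n → ℝ) (zb : Fin l → ℝ) (hmem : (xb, yb, zb) ∈ Z1)
    (hloc : ∃ ε > 0, ∀ p ∈ Z1, dist p (xb, yb, zb) < ε →
      F xb yb + α * π yb zb ≤ F p.1 p.2.1 + α * π p.2.1 p.2.2)
    (rb sb : Fin l → ℝ) (hT : ∀ i, 0 ≤ rb i ∧ 0 ≤ sb i ∧ rb i + sb i = 1)
    (hach : (∑ i, (rb i * zb i + sb i * (b i - A.mulVec yb i))) = π yb zb) :
    ∃ ε > 0, ∀ p ∈ Z1, ∀ rs : (Fin l → ℝ) × (Fin l → ℝ),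
      (∀ i, 0 ≤ rs.1 i ∧ 0 ≤ rs.2 i ∧ rs.1 i + rs.2 i = 1) →
      dist (p, rs) ((xb, yb, zb), (rb, sb)) < ε →
        F xb yb + α * ∑ i, (rb i * zb i + sb i * (b i - A.mulVec yb i)) ≤
          F p.1 p.2.1 + α * ∑ i, (rs.1 i * p.2.2 i + rs.2 i * (b i - A.mulVec p.2.1 i)) :=
  local_min_Palpha_to_Qalpha_general n l F A b α hα Z1 π hπ xb yb zb hloc rb sb hach
end
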